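/- arXiv:math/9908148 — 4 statements merged into one kernel-verified Lean document; each statement's English description precedes it below -/
import Mathlib

section
/- For all parameters b and c and all n ≥ 0: Σ_{k=0}^{n} (-n)_k (b)_k / (Γ(c+k) k!) = (c-b)_n / Γ(c+n). (Generalized Chu–Vandermonde summation valid without nonvanishing conditions on (c)_n, interpreting 1/Γ at nonpositive integers as 0.) -/
open Finset Real

/-- Pochhammer symbol (rising factorial) `(a)_k`. -/
noncomputable def poch (a : ℝ) (k : ℕ) : ℝ := (ascPochhammer ℝ k).eval a

/-- Classical Laguerre polynomial `L_n^{(α)}(x)` for arbitrary parameter α. -/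
noncomputable def lag (α : ℝ) (n : ℕ) (x : ℝ) : ℝ :=
  ∑ k ∈ Finset.range (n + 1),
    (-1 : ℝ) ^ k * (poch (α + k + 1) (n - k) / (Nat.factorial (n - k))) *
      x ^ k / (Nat.factorial k)

/-- Classical Jacobi polynomial `P_n^{(α,β)}(x)` for arbitrary parameters. -/
noncomputable def jac (α β : ℝ) (n : ℕ) (x : ℝ) : ℝ :=
  ∑ k ∈ Finset.range (n + 1),
    (poch ((n : ℝ) + α + β + 1) k / (Nat.factorial k)) *
      (poch (α + k + 1) (n - k) / (Nat.factorial (n - k))) * ((x - 1) / 2) ^ k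

/-- Generalized binomial coefficient `C(x, k)`. -/
noncomputable def genBinom (x : ℝ) (k : ℕ) : ℝ :=
  (∏ j ∈ Finset.range k, (x - j)) / (Nat.factorial k)

/-- Charlier polynomial `C_n^{(a)}(x)`. -/
noncomputable def charlier (a : ℝ) (n : ℕ) (x : ℝ) : ℝ :=
  ∑ k ∈ Finset.range (n + 1), genBinom x k * (-a) ^ (n - k) / (Nat.factorial (n - k))

lemma poch_succ (a : ℝ) (m : ℕ) : poch a (m + 1) = poch a m * (a + m) := by
  simp [poch, ascPochhammer_succ_eval]

lemma poch_succ_left (a : ℝ) (m : ℕ) : poch a (m + 1) = a * poch (a + 1) m := by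
  simp [poch, ascPochhammer_succ_left, Polynomial.eval_comp, mul_comm]

lemma inv_Gamma_eq (x : ℝ) : 1 / Real.Gamma x = x / Real.Gamma (x + 1) := by
  by_cases h : ∃ m : ℕ, x = -m
  · obtain ⟨m, rfl⟩ := h
    rw [(Real.Gamma_eq_zero_iff _).mpr ⟨m, rfl⟩]
    cases m with
    | zero => simp
    | succ m =>
      have h1 : (-((m + 1 : ℕ) : ℝ)) + 1 = -(m : ℝ) := by push_cast; ring
      rw [h1, (Real.Gamma_eq_zero_iff _).mpr ⟨m, rfl⟩]
      simp
  · push_neg at h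
    have hx : x ≠ 0 := by simpa using h 0
    have hG : Real.Gamma x ≠ 0 := Real.Gamma_ne_zero h
    rw [Real.Gamma_add_one hx]
    field_simp

lemma inv_Gamma_poch (x : ℝ) (m : ℕ) :
    1 / Real.Gamma x = poch x m / Real.Gamma (x + m) := by
  induction m with
  | zero => simp [poch]
  | succ m ih =>
    rw [ih, poch_succ, div_eq_mul_one_div (poch x m), inv_Gamma_eq (x + m)]
    have h1 : (x + m) + 1 = x + ((m + 1 : ℕ) : ℝ) := by push_cast; ring
    rw [h1]
    ring

lemma chu_vandermonde_poly (n : ℕ) : ∀ b c : ℝ,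
    ∑ k ∈ Finset.range (n + 1),
      (-1 : ℝ) ^ k * (n.choose k) * poch b k * poch (c + k) (n - k) = poch (c - b) n := by
  induction n with
  | zero => intro b c; simp [poch]
  | succ n ih =>
    intro b c
    have h0 : ∑ k ∈ Finset.range (n + 1 + 1),
          (-1 : ℝ) ^ k * ((n + 1).choose k) * poch b k * poch (c + k) (n + 1 - k)
        = (∑ k ∈ Finset.range (n + 1), (-1 : ℝ) ^ (k + 1) * ((n + 1).choose (k + 1)) *
            poch b (k + 1) * poch (c + ((k + 1 : ℕ) : ℝ)) (n + 1 - (k + 1)))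
          + (-1 : ℝ) ^ 0 * ((n + 1).choose 0) * poch b 0 * poch (c + ((0 : ℕ) : ℝ)) (n + 1 - 0) :=
      Finset.sum_range_succ' _ (n + 1)
    have h1 : ∑ k ∈ Finset.range (n + 1), (-1 : ℝ) ^ (k + 1) * ((n + 1).choose (k + 1)) *
            poch b (k + 1) * poch (c + ((k + 1 : ℕ) : ℝ)) (n + 1 - (k + 1))
        = (∑ k ∈ Finset.range (n + 1), (-1 : ℝ) ^ (k + 1) * ((n).choose (k + 1)) *
            poch b (k + 1) * poch (c + ((k + 1 : ℕ) : ℝ)) (n + 1 - (k + 1)))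
          + (-b) * ∑ k ∈ Finset.range (n + 1), (-1 : ℝ) ^ k * ((n).choose k) *
            poch (b + 1) k * poch ((c + 1) + k) (n - k) := by
      rw [Finset.mul_sum, ← Finset.sum_add_distrib]
      apply Finset.sum_congr rfl
      intro k hk
      have hc : c + ((k + 1 : ℕ) : ℝ) = (c + 1) + (k : ℝ) := by push_cast; ring
      have hs : n + 1 - (k + 1) = n - k := by omega
      have hch : (((n + 1).choose (k + 1) : ℕ) : ℝ) = (n.choose k : ℝ) + (n.choose (k + 1) : ℝ) := by
        rw [Nat.choose_succ_succ]; push_cast; ring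
      rw [hch, hs, hc, poch_succ_left b k]
      ring
    have h2 : (∑ k ∈ Finset.range (n + 1), (-1 : ℝ) ^ (k + 1) * ((n).choose (k + 1)) *
            poch b (k + 1) * poch (c + ((k + 1 : ℕ) : ℝ)) (n + 1 - (k + 1)))
          + (-1 : ℝ) ^ 0 * ((n).choose 0) * poch b 0 * poch (c + ((0 : ℕ) : ℝ)) (n + 1 - 0)
        = ∑ k ∈ Finset.range (n + 1 + 1),
            (-1 : ℝ) ^ k * ((n).choose k) * poch b k * poch (c + k) (n + 1 - k) :=
      (Finset.sum_range_succ'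
        (fun k => (-1 : ℝ) ^ k * ((n).choose k) * poch b k * poch (c + k) (n + 1 - k))
        (n + 1)).symm
    have h3 : ∑ k ∈ Finset.range (n + 1 + 1),
            (-1 : ℝ) ^ k * ((n).choose k) * poch b k * poch (c + k) (n + 1 - k)
        = (c + n) * ∑ k ∈ Finset.range (n + 1),
            (-1 : ℝ) ^ k * ((n).choose k) * poch b k * poch (c + k) (n - k) := by
      rw [Finset.sum_range_succ, Nat.choose_succ_self]
      simp only [Nat.cast_zero, mul_zero, zero_mul, add_zero]
      rw [Finset.mul_sum]
      apply Finset.sum_congr rfl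
      intro k hk
      have hk' : k ≤ n := Nat.lt_succ_iff.mp (Finset.mem_range.mp hk)
      have hs : n + 1 - k = (n - k) + 1 := by omega
      rw [hs, poch_succ]
      have harg : (c + k) + ((n - k : ℕ) : ℝ) = c + n := by
        have : ((n - k : ℕ) : ℝ) = (n : ℝ) - k := by
          push_cast [hk']; ring
        rw [this]; ring
      rw [harg]
      ring
    have hA := ih (b + 1) (c + 1)
    have hB := ih b c
    rw [show (c + 1) - (b + 1) = c - b from by ring] at hA
    have hend : poch (c - b) (n + 1) = poch (c - b) n * ((c - b) + n) := poch_succ _ _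
    simp only [Nat.choose_zero_right] at h0 h2
    linear_combination h0 + h1 + h2 + h3 + (c + n) * hB + (-b) * hA - hend

theorem stmt1 (b c : ℝ) (n : ℕ) :
    ∑ k ∈ Finset.range (n + 1),
        poch (-(n : ℝ)) k * poch b k / (Real.Gamma (c + k) * (Nat.factorial k)) =
      poch (c - b) n / Real.Gamma (c + n) := by
  have key := chu_vandermonde_poly n b c
  calc ∑ k ∈ Finset.range (n + 1),
        poch (-(n : ℝ)) k * poch b k / (Real.Gamma (c + k) * (Nat.factorial k))
      = ∑ k ∈ Finset.range (n + 1),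
          ((-1 : ℝ) ^ k * (n.choose k) * poch b k * poch (c + k) (n - k)) *
            (1 / Real.Gamma (c + n)) := by
        apply Finset.sum_congr rfl
        intro k hk
        have hk' : k ≤ n := Nat.lt_succ_iff.mp (Finset.mem_range.mp hk)
        have h1 : poch (-(n : ℝ)) k = (-1 : ℝ) ^ k * ((k.factorial : ℝ) * (n.choose k : ℝ)) := by
          rw [poch, ascPochhammer_eval_neg_eq_descPochhammer,
            descPochhammer_eval_eq_descFactorial, Nat.descFactorial_eq_factorial_mul_choose]
          push_cast; ring
        have h3 : 1 / Real.Gamma (c + k) = poch (c + k) (n - k) / Real.Gamma (c + n) := by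
          rw [inv_Gamma_poch (c + k) (n - k)]
          have harg : (c + k) + ((n - k : ℕ) : ℝ) = c + n := by
            have : ((n - k : ℕ) : ℝ) = (n : ℝ) - k := by push_cast [hk']; ring
            rw [this]; ring
          rw [harg]
        have hf : (k.factorial : ℝ) ≠ 0 := Nat.cast_ne_zero.mpr k.factorial_ne_zero
        have h4 : poch (-(n : ℝ)) k * poch b k / (Real.Gamma (c + k) * (Nat.factorial k))
            = poch (-(n : ℝ)) k * poch b k * (1 / Real.Gamma (c + k)) / (k.factorial : ℝ) := by
          ring
        rw [h4, h3, h1]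
        rw [div_eq_iff hf]
        ring
    _ = poch (c - b) n / Real.Gamma (c + n) := by
        rw [← Finset.sum_mul, key, mul_one_div]
end

section
/- For all parameters α, β and all n ≥ 0 and all x, y: Σ_{k=0}^{n} [(α+β+2k+1)(α+β+1)_k / Γ(α+β+n+k+2)] · P_k^{(α,β)}(x) · P_{n-k}^{(-n-α-1,-n-β-1)}(y) = (1/Γ(α+β+1)) · (1/n!) · ((x-y)/2)^n. -/
open Finset Real

lemma poch_add (a : ℝ) (m n : ℕ) : poch a (m + n) = poch a m * poch (a + m) n := by
  simp [poch, ← ascPochhammer_mul, Polynomial.eval_comp]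

lemma poch_neg (a : ℝ) (m : ℕ) : poch (-a) m = (-1) ^ m * poch (a - m + 1) m := by
  rw [poch, ascPochhammer_eval_neg_eq_descPochhammer, descPochhammer_eval_eq_ascPochhammer, poch]

lemma Real.inv_Gamma_eq_mul_inv_Gamma_add_one (s : ℝ) :
    (Gamma s)⁻¹ = s * (Gamma (s + 1))⁻¹ := by
  rcases ne_or_eq s 0 with h | rfl
  · rw [Real.Gamma_add_one h, mul_inv, mul_inv_cancel_left₀ h]
  · rw [zero_add, Real.Gamma_zero, inv_zero, zero_mul]

lemma poch_mul_inv_Gamma_add (s : ℝ) (m : ℕ) : poch s m * (Gamma (s + m))⁻¹ = (Gamma s)⁻¹ := by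
  induction m with
  | zero => simp [poch]
  | succ m ih =>
    rw [← ih, poch_succ, Real.inv_Gamma_eq_mul_inv_Gamma_add_one (s + m)]
    push_cast
    ring_nf

lemma sum_range_alternating_choose_poch_div_Gamma_partial (d : ℝ) (K m : ℕ) :
    ∑ l ∈ range (m + 1), (-1) ^ l * ((K + 1).choose l : ℝ) * (d + 2 * l) * poch d l /
        Gamma (d + (K + 1 : ℕ) + l + 1) =
      (-1) ^ m * (K.choose m : ℝ) * poch d (m + 1) / Gamma (d + K + m + 2) := by
  induction m with
  | zero =>
    rw [sum_range_one, show d + (K + 1 : ℕ) + (0 : ℕ) + 1 = d + K + (0 : ℕ) + 2 by push_cast; ring]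
    simp [poch]
  | succ m ih =>
    have hchoose : ((K + 1).choose (m + 1) : ℝ) * (m + 1) = (K + 1) * K.choose m :=
      mod_cast (Nat.add_one_mul_choose_eq K m).symm
    have hpascal : ((K + 1).choose (m + 1) : ℝ) = K.choose m + K.choose (m + 1) :=
      mod_cast Nat.choose_succ_succ' K m
    rw [sum_range_succ, ih, poch_succ d (m + 1)]
    simp only [div_eq_mul_inv]
    rw [Real.inv_Gamma_eq_mul_inv_Gamma_add_one (d + K + m + 2)]
    push_cast
    rw [show d + (K + 1 : ℝ) + (m + 1) + 1 = d + K + m + 2 + 1 by ring,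
      show d + (K : ℝ) + (m + 1) + 2 = d + K + m + 2 + 1 by ring]
    linear_combination (-1) ^ m * poch d (m + 1) * (Gamma (d + K + m + 2 + 1))⁻¹ *
      (-(d + m + 1) * hpascal - hchoose)

lemma sum_range_alternating_choose_poch_div_Gamma (d : ℝ) (N : ℕ) :
    ∑ l ∈ range (N + 1), (-1) ^ l * (N.choose l : ℝ) * (d + 2 * l) * poch d l /
        Gamma (d + N + l + 1) =
      if N = 0 then (Gamma d)⁻¹ else 0 := by
  cases N with
  | zero => simp [poch, div_eq_mul_inv, Real.inv_Gamma_eq_mul_inv_Gamma_add_one d]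
  | succ K =>
    rw [sum_range_alternating_choose_poch_div_Gamma_partial, Nat.choose_succ_self,
      if_neg K.succ_ne_zero]
    simp

lemma jac_neg_params (a b y : ℝ) {n k : ℕ} (hk : k ≤ n) :
    jac (-(n : ℝ) - a - 1) (-(n : ℝ) - b - 1) (n - k) y =
      (-1) ^ (n - k) * ∑ j ∈ range (n - k + 1),
        poch (a + b + n + k + 2 - j) j * poch (a + k + 1) (n - k - j) /
          (j.factorial * (n - k - j).factorial) * ((y - 1) / 2) ^ j := by
  rw [jac, mul_sum]
  refine sum_congr rfl fun j hj => ?_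
  have hj : j ≤ n - k := Nat.lt_succ_iff.mp (mem_range.mp hj)
  rw [show ((n - k : ℕ) : ℝ) + (-(n : ℝ) - a - 1) + (-(n : ℝ) - b - 1) + 1
      = -(a + b + n + k + 1) by push_cast [hk]; ring,
    show -(n : ℝ) - a - 1 + j + 1 = -(n + a - j) by ring, poch_neg, poch_neg,
    show (n + a - j - (n - k - j : ℕ) + 1 : ℝ) = a + k + 1 by push_cast [hk, hj]; ring,
    show (a + b + n + k + 1 - j + 1 : ℝ) = a + b + n + k + 2 - j by ring,
    ← Nat.add_sub_of_le hj, pow_add, Nat.add_sub_cancel_left]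
  ring

/-- The coefficient of `((x - 1) / 2) ^ i * ((y - 1) / 2) ^ j` in the `k`-th summand of the
left-hand side of `stmt3`. -/
noncomputable def summandCoeff (α β : ℝ) (n k i j : ℕ) : ℝ :=
  (α + β + 2 * k + 1) * poch (α + β + 1) k / Gamma (α + β + n + k + 2) *
    (poch (k + α + β + 1) i * poch (α + i + 1) (k - i) / (i.factorial * (k - i).factorial)) *
    ((-1) ^ (n - k) * (poch (α + β + n + k + 2 - j) j * poch (α + k + 1) (n - k - j) /
      (j.factorial * (n - k - j).factorial)))

lemma summand_eq_sum_summandCoeff (α β x y : ℝ) {n k : ℕ} (hk : k ≤ n) :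
    (α + β + 2 * k + 1) * poch (α + β + 1) k / Gamma (α + β + n + k + 2) *
        jac α β k x * jac (-(n : ℝ) - α - 1) (-(n : ℝ) - β - 1) (n - k) y =
      ∑ i ∈ range (k + 1), ∑ j ∈ range (n - k + 1),
        summandCoeff α β n k i j * ((x - 1) / 2) ^ i * ((y - 1) / 2) ^ j := by
  rw [jac, jac_neg_params α β y hk, mul_sum, mul_sum, sum_mul]
  refine sum_congr rfl fun i _ => ?_
  rw [mul_sum]
  refine sum_congr rfl fun j _ => ?_
  rw [summandCoeff]
  ring

lemma summandCoeff_add_left (α β : ℝ) {n i j l : ℕ} (h : i + j + l ≤ n) :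
    summandCoeff α β n (i + l) i j =
      poch (α + β + 1) (2 * i) * poch (α + i + 1) (n - i - j) * (-1) ^ (n - i) /
          (i.factorial * j.factorial * (n - i - j).factorial) *
        ((-1) ^ l * ((n - i - j).choose l : ℝ) * (α + β + 1 + 2 * i + 2 * l) *
          poch (α + β + 1 + 2 * i) l / Gamma (α + β + 1 + 2 * i + (n - i - j : ℕ) + l + 1)) := by
  set N := n - i - j with hN
  have hl : l ≤ N := by omega
  have hpoch_s : poch (α + β + 1) (i + l) * poch ((i + l : ℕ) + α + β + 1) i =
      poch (α + β + 1) (2 * i) * poch (α + β + 1 + 2 * i) l := by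
    rw [show ((i + l : ℕ) : ℝ) + α + β + 1 = α + β + 1 + (i + l : ℕ) by ring, ← poch_add,
      show (α + β + 1 + 2 * i : ℝ) = α + β + 1 + (2 * i : ℕ) by push_cast; ring, ← poch_add]
    congr 1
    omega
  have hGamma : poch (α + β + n + (i + l : ℕ) + 2 - j) j / Gamma (α + β + n + (i + l : ℕ) + 2) =
      (Gamma (α + β + 1 + 2 * i + N + l + 1))⁻¹ := by
    have := poch_mul_inv_Gamma_add (α + β + n + (i + l : ℕ) + 2 - j) j
    rw [sub_add_cancel] at this
    rw [div_eq_mul_inv, this, hN]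
    push_cast [show i ≤ n by omega, show j ≤ n - i by omega]
    ring_nf
  have hpoch_α : poch (α + i + 1) l * poch (α + (i + l : ℕ) + 1) (N - l) = poch (α + i + 1) N := by
    rw [show (α + (i + l : ℕ) + 1 : ℝ) = α + i + 1 + l by push_cast; ring, ← poch_add,
      Nat.add_sub_cancel' hl]
  have hfactorial : ((l.factorial : ℝ) * (N - l).factorial)⁻¹ = N.choose l / N.factorial := by
    rw [Nat.cast_choose ℝ hl]
    field_simp
  have hsign : (-1 : ℝ) ^ (n - (i + l)) = (-1) ^ (n - i) * (-1) ^ l := by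
    rw [← pow_add, show n - i + l = n - (i + l) + 2 * l by omega, pow_add, pow_mul]
    norm_num
  rw [summandCoeff, show i + l - i = l by omega, show n - (i + l) - j = N - l by omega]
  calc _ = (α + β + 2 * (i + l : ℕ) + 1) *
          (poch (α + β + 1) (i + l) * poch ((i + l : ℕ) + α + β + 1) i) *
          (poch (α + β + n + (i + l : ℕ) + 2 - j) j / Gamma (α + β + n + (i + l : ℕ) + 2)) *
          (poch (α + i + 1) l * poch (α + (i + l : ℕ) + 1) (N - l)) * (-1 : ℝ) ^ (n - (i + l)) /
          (i.factorial * j.factorial) * ((l.factorial : ℝ) * (N - l).factorial)⁻¹ := by ring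
    _ = _ := by
      rw [hpoch_s, hGamma, hpoch_α, hsign, hfactorial]
      push_cast
      ring

lemma sum_summandCoeff_add_left (α β : ℝ) {n i j : ℕ} (hij : i + j ≤ n) :
    ∑ l ∈ range (n - i - j + 1), summandCoeff α β n (i + l) i j =
      if i + j = n then (-1) ^ j / (Gamma (α + β + 1) * i.factorial * j.factorial) else 0 := by
  rw [sum_congr rfl fun l hl => summandCoeff_add_left α β (by have := mem_range.mp hl; omega),
    ← mul_sum, sum_range_alternating_choose_poch_div_Gamma]
  by_cases hn : i + j = n
  · subst hn
    have hpoch := poch_mul_inv_Gamma_add (α + β + 1) (2 * i)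
    push_cast at hpoch
    rw [if_pos (by omega), if_pos rfl, Nat.add_sub_cancel_left, Nat.sub_self,
      show poch (α + i + 1) 0 = 1 by simp [poch], Nat.factorial_zero, Nat.cast_one]
    linear_combination (-1) ^ j / (i.factorial * j.factorial : ℝ) * hpoch
  · rw [if_neg (by omega), if_neg hn, mul_zero]

lemma sum_range_triangle_reindex {M : Type*} [AddCommMonoid M] (n : ℕ) (f : ℕ → ℕ → ℕ → M) :
    ∑ k ∈ range (n + 1), ∑ i ∈ range (k + 1), ∑ j ∈ range (n - k + 1), f k i j =
      ∑ i ∈ range (n + 1), ∑ j ∈ range (n - i + 1), ∑ l ∈ range (n - i - j + 1), f (i + l) i j := by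
  calc _ = ∑ k ∈ range (n + 1), ∑ i ∈ range (k + 1),
        ∑ j ∈ range (n - (i + (k - i)) + 1), f (i + (k - i)) i j := by
        refine sum_congr rfl fun k _ => sum_congr rfl fun i hi => ?_
        rw [Nat.add_sub_cancel' (by simpa [Nat.lt_succ_iff] using hi)]
    _ = ∑ i ∈ range (n + 1), ∑ l ∈ range (n + 1 - i),
          ∑ j ∈ range (n - (i + l) + 1), f (i + l) i j :=
        sum_range_diag_flip _ fun i l => ∑ j ∈ range (n - (i + l) + 1), f (i + l) i j
    _ = _ := sum_congr rfl fun i hi => sum_comm' fun l j => by simp only [mem_range] at hi ⊢; omega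

theorem stmt3 (α β : ℝ) (n : ℕ) (x y : ℝ) :
    ∑ k ∈ Finset.range (n + 1),
        (α + β + 2 * k + 1) * poch (α + β + 1) k / Real.Gamma (α + β + n + k + 2) *
          jac α β k x * jac (-(n : ℝ) - α - 1) (-(n : ℝ) - β - 1) (n - k) y =
      1 / Real.Gamma (α + β + 1) * (1 / (Nat.factorial n)) * ((x - y) / 2) ^ n := by
  set u := (x - 1) / 2
  set v := (y - 1) / 2
  calc _ = ∑ i ∈ range (n + 1), ∑ j ∈ range (n - i + 1),
        (∑ l ∈ range (n - i - j + 1), summandCoeff α β n (i + l) i j) * u ^ i * v ^ j := by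
        simp only [sum_mul]
        rw [← sum_range_triangle_reindex n fun k i j => summandCoeff α β n k i j * u ^ i * v ^ j]
        exact sum_congr rfl fun k hk =>
          summand_eq_sum_summandCoeff α β x y (Nat.lt_succ_iff.mp (mem_range.mp hk))
    _ = ∑ i ∈ range (n + 1),
          (-1) ^ (n - i) / (Gamma (α + β + 1) * i.factorial * (n - i).factorial) *
            u ^ i * v ^ (n - i) := by
        refine sum_congr rfl fun i hi => ?_
        have hi : i ≤ n := Nat.lt_succ_iff.mp (mem_range.mp hi)
        rw [sum_eq_single_of_mem (n - i) (self_mem_range_succ _) fun j hj hne => ?_]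
        · rw [sum_summandCoeff_add_left α β (by omega), if_pos (by omega)]
        · have hj : j ≤ n - i := Nat.lt_succ_iff.mp (mem_range.mp hj)
          rw [sum_summandCoeff_add_left α β (by omega), if_neg (by omega), zero_mul, zero_mul]
    _ = _ := by
        rw [show (x - y) / 2 = u - v by ring, sub_pow, mul_sum]
        refine sum_congr rfl fun i hi => ?_
        have hi : i ≤ n := Nat.lt_succ_iff.mp (mem_range.mp hi)
        rw [Nat.cast_choose ℝ hi, show i + n = n - i + 2 * i by omega, pow_add, pow_mul, neg_one_sq,
          one_pow, mul_one]
        field_simp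
end

section
/- (Charlier inversion formula) For any parameter a and integers 0 ≤ j ≤ i: Σ_{k=j}^{i} C_{i-k}^{(-a)}(-x) · C_{k-j}^{(a)}(x) = δ_{ij}, where C_n^{(a)}(x) are the Charlier polynomials defined via the generating function e^{-at}(1+t)^x = Σ_{n≥0} C_n^{(a)}(x) t^n. -/
open Finset Real

/-! The Charlier polynomials are the coefficients of `(1 + t) ^ x * exp (-a t)`. Since
`(1 + t) ^ (-x) * exp (a t)` is the inverse of that series, the convolution of the two coefficient
sequences is the coefficient sequence of `1`, which is the inversion formula. -/

open PowerSeries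

lemma genBinom_eq_choose (x : ℝ) (k : ℕ) : genBinom x k = Ring.choose x k := by
  rw [Ring.choose_eq_smul, ← Polynomial.aeval_eq_smeval, ← Polynomial.eval_map_algebraMap,
    descPochhammer_map, descPochhammer_eval_eq_prod_range, genBinom,
    smul_eq_mul, inv_mul_eq_div]

noncomputable def charlierSeries (a x : ℝ) : ℝ⟦X⟧ :=
  PowerSeries.binomialSeries ℝ x * rescale (-a) (exp ℝ)

lemma charlier_eq_coeff_charlierSeries (a : ℝ) (n : ℕ) (x : ℝ) :
    charlier a n x = coeff n (charlierSeries a x) := by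
  rw [charlierSeries, coeff_mul, Nat.sum_antidiagonal_eq_sum_range_succ_mk, charlier]
  refine sum_congr rfl fun k _ => ?_
  simp [genBinom_eq_choose, coeff_exp, div_eq_mul_inv, mul_assoc]

lemma charlierSeries_neg_mul_charlierSeries (a x : ℝ) :
    charlierSeries (-a) (-x) * charlierSeries a x = 1 := by
  calc charlierSeries (-a) (-x) * charlierSeries a x
      = PowerSeries.binomialSeries ℝ (-x + x) * rescale (- -a + -a) (exp ℝ) := by
        rw [charlierSeries, charlierSeries, binomialSeries_add, ← exp_mul_exp_eq_exp_add]
        ring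
    _ = 1 := by simp

lemma sum_Icc_sub_sub_eq_sum_antidiagonal {M : Type*} [AddCommMonoid M] (f : ℕ → ℕ → M)
    {i j : ℕ} (hij : j ≤ i) :
    ∑ k ∈ Icc j i, f (i - k) (k - j) = ∑ p ∈ antidiagonal (i - j), f p.1 p.2 := by
  refine sum_nbij' (fun k => (i - k, k - j)) (fun p => p.2 + j) ?_ ?_ ?_ ?_ (fun _ _ => rfl)
  all_goals
    intro p hp
    simp only [mem_Icc, HasAntidiagonal.mem_antidiagonal, Prod.ext_iff] at hp ⊢
    omega

theorem stmt10 (a : ℝ) (i j : ℕ) (hij : j ≤ i) (x : ℝ) :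
    ∑ k ∈ Finset.Icc j i, charlier (-a) (i - k) (-x) * charlier a (k - j) x =
      if i = j then 1 else 0 := by
  simp_rw [sum_Icc_sub_sub_eq_sum_antidiagonal (fun m n => charlier (-a) m (-x) * charlier a n x)
    hij, charlier_eq_coeff_charlierSeries, ← coeff_mul, charlierSeries_neg_mul_charlierSeries,
    coeff_one]
  congr 1
  simp only [eq_iff_iff]
  omega
end

section
/- (Generalized Laguerre inversion) For all parameters α, p, q and all n ≥ 0: Σ_{k=0}^{n} L_k^{(α+p)}(x) · L_{n-k}^{(-α-q)}(-x) = (p-q+2)_n / n!. -/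
open Finset Real

/-!
Since `d/dx L_{n+1}^{(α)} = -L_n^{(α+1)}`, the derivative in `x` of the convolution
`S_{n+1}(a, b; x) = ∑ₖ L_k^{(a)}(x) L_{n+1-k}^{(b)}(-x)` is `S_n(a, b+1; x) - S_n(a+1, b; x)`.
By induction on `n`, `S_n(a, b; x)` depends only on `a + b`, so this derivative vanishes and
`S_{n+1}` is constant in `x`. At `x = 0` we have `L_k^{(α)}(0) = (α+1)_k / k!`, and the value
`(a+b+2)_n / n!` is the Chu–Vandermonde identity for rising factorials, which follows from the
binomial one via `choose (-r) n = (-1)ⁿ multichoose r n`.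
-/

namespace Ring

theorem multichoose_add {R : Type*} [Ring R] [BinomialRing R] {r s : R} (n : ℕ)
    (h : Commute r s) :
    multichoose (r + s) n = ∑ ij ∈ antidiagonal n, multichoose r ij.1 * multichoose s ij.2 := by
  have hneg := add_choose_eq n h.neg_left.neg_right
  rw [← neg_add, choose_neg'] at hneg
  have hsign : ∀ ij ∈ antidiagonal n, choose (-r) ij.1 * choose (-s) ij.2 =
      Int.negOnePow n • (multichoose r ij.1 * multichoose s ij.2) := by
    rintro ⟨i, j⟩ hij
    rw [HasAntidiagonal.mem_antidiagonal] at hij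
    rw [choose_neg', choose_neg', smul_mul_smul_comm, ← Int.negOnePow_add, ← hij]
    rfl
  rw [sum_congr rfl hsign, ← smul_sum] at hneg
  simpa using congrArg (Int.negOnePow n • ·) hneg

end Ring

theorem hasDerivAt_pow_succ_div_factorial {𝕜 : Type*} [NontriviallyNormedField 𝕜] [CharZero 𝕜]
    (i : ℕ) (x : 𝕜) :
    HasDerivAt (fun y : 𝕜 => y ^ (i + 1) / (i + 1).factorial) (x ^ i / i.factorial) x := by
  refine ((hasDerivAt_pow (i + 1) x).div_const _).congr_deriv ?_
  rw [Nat.factorial_succ, Nat.cast_mul, Nat.add_sub_cancel,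
    mul_div_mul_left _ _ (Nat.cast_ne_zero.mpr i.succ_ne_zero)]

theorem poch_div_factorial (a : ℝ) (n : ℕ) : poch a n / n.factorial = Ring.multichoose a n := by
  rw [div_eq_iff (by positivity), poch, ← Polynomial.ascPochhammer_smeval_eq_eval,
    ← Ring.factorial_nsmul_multichoose_eq_ascPochhammer, nsmul_eq_mul, mul_comm]

theorem poch_add_div_factorial (u v : ℝ) (n : ℕ) :
    poch (u + v) n / n.factorial =
      ∑ k ∈ range (n + 1), poch u k / k.factorial * (poch v (n - k) / (n - k).factorial) := by
  simp only [poch_div_factorial, Ring.multichoose_add n (Commute.all u v),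
    Nat.sum_antidiagonal_eq_sum_range_succ_mk]

theorem lag_degree_zero (α x : ℝ) : lag α 0 x = 1 := by simp [lag, poch]

theorem lag_at_zero (α : ℝ) (n : ℕ) : lag α n 0 = poch (α + 1) n / n.factorial := by
  rw [lag, sum_eq_single 0 (fun k _ hk => by simp [hk]) (by simp)]
  simp

theorem hasDerivAt_lag_succ (α : ℝ) (n : ℕ) (x : ℝ) :
    HasDerivAt (lag α (n + 1)) (-lag (α + 1) n x) x := by
  have hlag : lag α (n + 1) = fun y => ∑ i ∈ range (n + 1),
      (-1) ^ (i + 1) * (poch (α + 1 + i + 1) (n - i) / (n - i).factorial) *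
        (y ^ (i + 1) / (i + 1).factorial) + poch (α + 1) (n + 1) / (n + 1).factorial := by
    ext y
    rw [lag, sum_range_succ']
    congr 1
    · refine sum_congr rfl fun i _ => ?_
      rw [Nat.add_sub_add_right, Nat.cast_succ, ← add_assoc, add_right_comm α]
      ring
    · simp
  rw [hlag, lag, ← sum_neg_distrib]
  refine ((HasDerivAt.fun_sum fun i _ =>
    (hasDerivAt_pow_succ_div_factorial i x).const_mul _).add_const _).congr_deriv ?_
  refine sum_congr rfl fun i _ => ?_
  ring

noncomputable def lagDeriv (α : ℝ) : ℕ → ℝ → ℝ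
  | 0, _ => 0
  | n + 1, x => -lag (α + 1) n x

theorem hasDerivAt_lag (α : ℝ) (n : ℕ) (x : ℝ) : HasDerivAt (lag α n) (lagDeriv α n x) x := by
  cases n with
  | zero =>
    rw [show lag α 0 = fun _ => 1 from funext (lag_degree_zero α)]
    exact hasDerivAt_const x 1
  | succ n => exact hasDerivAt_lag_succ α n x

noncomputable def lagConv (a b : ℝ) (n : ℕ) (x : ℝ) : ℝ :=
  ∑ k ∈ range (n + 1), lag a k x * lag b (n - k) (-x)

theorem hasDerivAt_lagConv_succ (a b : ℝ) (n : ℕ) (x : ℝ) :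
    HasDerivAt (lagConv a b (n + 1)) (lagConv a (b + 1) n x - lagConv (a + 1) b n x) x := by
  have hterm : ∀ k ∈ range (n + 2), HasDerivAt (fun y => lag a k y * lag b (n + 1 - k) (-y))
      (lagDeriv a k x * lag b (n + 1 - k) (-x) - lag a k x * lagDeriv b (n + 1 - k) (-x)) x := by
    intro k _
    have hneg : HasDerivAt (fun y => lag b (n + 1 - k) (-y))
        (lagDeriv b (n + 1 - k) (-x) * -1) x :=
      (hasDerivAt_lag b (n + 1 - k) (-x)).comp x (hasDerivAt_neg x)
    exact ((hasDerivAt_lag a k x).mul hneg).congr_deriv (by ring)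
  have hleft : ∑ k ∈ range (n + 2), lagDeriv a k x * lag b (n + 1 - k) (-x) =
      -lagConv (a + 1) b n x := by
    rw [sum_range_succ', lagConv, ← sum_neg_distrib]
    simp [lagDeriv]
  have hright : ∑ k ∈ range (n + 2), lag a k x * lagDeriv b (n + 1 - k) (-x) =
      -lagConv a (b + 1) n x := by
    rw [sum_range_succ, lagConv, ← sum_neg_distrib]
    simp only [Nat.sub_self, lagDeriv, mul_zero, add_zero]
    refine sum_congr rfl fun k hk => ?_
    rw [Nat.sub_add_comm (Nat.le_of_lt_succ (mem_range.mp hk))]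
    exact mul_neg _ _
  refine (HasDerivAt.fun_sum hterm).congr_deriv ?_
  rw [sum_sub_distrib, hleft, hright]
  ring

theorem lagConv_at_zero (a b : ℝ) (n : ℕ) :
    lagConv a b n 0 = poch (a + b + 2) n / n.factorial := by
  rw [show a + b + 2 = (a + 1) + (b + 1) by ring, poch_add_div_factorial, lagConv]
  simp only [neg_zero, lag_at_zero]

theorem lagConv_eq_poch_div_factorial (n : ℕ) (a b x : ℝ) :
    lagConv a b n x = poch (a + b + 2) n / n.factorial := by
  induction n generalizing a b x with
  | zero => simp [lagConv, lag_degree_zero, poch]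
  | succ n ih =>
    rw [← lagConv_at_zero]
    refine is_const_of_deriv_eq_zero
      (fun y => (hasDerivAt_lagConv_succ a b n y).differentiableAt) (fun y => ?_) x 0
    rw [(hasDerivAt_lagConv_succ a b n y).deriv, ih, ih, add_right_comm a 1 b, add_assoc a b 1,
      sub_self]

theorem stmt11 (α p q : ℝ) (n : ℕ) (x : ℝ) :
    ∑ k ∈ Finset.range (n + 1), lag (α + p) k x * lag (-α - q) (n - k) (-x) =
      poch (p - q + 2) n / (Nat.factorial n) := by
  rw [← lagConv, lagConv_eq_poch_div_factorial, show α + p + (-α - q) = p - q by ring]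
end
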